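/- Fix n ≥ 1, s ∈ ℕ, and a function w : {0, 1, ..., n−2} → ℕ. Call a pair (t, a), with t ∈ ℕ, t ≤ s, and a : {0,...,n−2} → ℕ with a(j) ≤ w(j) for all j, admissible if: (i) t is even, and (ii) for every j, if either t > 0 or there exists j' > j with a(j') > 0, then a(j) = w(j). Then for every even integer c with 0 ≤ c ≤ s + 2·Σ_j w(j), there exists exactly one admissible pair (t, a) with t + 2·Σ_j a(j) = c. -/
import Mathlib

/-- A pair `(t, a)` is admissible (relative to `s` and `w`): it describes an
orientable summand `V''` whose stabilizers dominate those of `V'`. -/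
def Admissible (n s : ℕ) (w : Fin (n - 1) → ℕ) (t : ℕ) (a : Fin (n - 1) → ℕ) : Prop :=
  t ≤ s ∧ (∀ j, a j ≤ w j) ∧ Even t ∧
    ∀ j, ((0 < t ∨ ∃ j', j < j' ∧ 0 < a j') → a j = w j)

-- split lemma
lemma split_sum {m : ℕ} (j : Fin m) (f : Fin m → ℕ) :
    ∑ x, f x = (∑ x ∈ Finset.univ.filter (· < j), f x) + f j
      + ∑ x ∈ Finset.univ.filter (j < ·), f x := by
  classical
  rw [← Finset.sum_filter_add_sum_filter_not Finset.univ (· < j) f]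
  have : Finset.univ.filter (fun x => ¬ x < j) = insert j (Finset.univ.filter (j < ·)) := by
    ext x
    simp only [Finset.mem_filter, Finset.mem_univ, true_and, Finset.mem_insert, not_lt]
    constructor
    · intro h
      rcases eq_or_lt_of_le h with h' | h'
      · exact Or.inl h'.symm
      · exact Or.inr h'
    · rintro (rfl | h)
      · exact le_rfl
      · exact h.le
  rw [this, Finset.sum_insert (by simp)]
  ring

lemma key_uniq_aux {m : ℕ} (w a b : Fin m → ℕ) (ha : ∀ j, a j ≤ w j)
    (hpb : ∀ j, (∃ j', j < j' ∧ 0 < b j') → b j = w j)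
    (hsum : ∑ j, a j = ∑ j, b j) (j : Fin m)
    (hmax : ∀ j', j < j' → a j' = b j') (hlt : a j < b j) : False := by
  have hso : ∑ x ∈ Finset.univ.filter (j < ·), a x
      = ∑ x ∈ Finset.univ.filter (j < ·), b x :=
    Finset.sum_congr rfl (fun x hx => hmax x (by simpa using hx))
  have h1 := split_sum j a
  have h2 := split_sum j b
  have hlo : ∑ x ∈ Finset.univ.filter (· < j), b x
      < ∑ x ∈ Finset.univ.filter (· < j), a x := by omega
  have : ∃ x ∈ Finset.univ.filter (· < j), b x < a x := by
    by_contra hcon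
    push_neg at hcon
    exact absurd (Finset.sum_le_sum hcon) (not_le.mpr hlo)
  obtain ⟨x, hx, hxlt⟩ := this
  have hxj : x < j := by simpa using hx
  have : b x = w x := hpb x ⟨j, hxj, by omega⟩
  have := ha x
  omega

lemma key_uniq {m : ℕ} (w a b : Fin m → ℕ) (ha : ∀ j, a j ≤ w j) (hb : ∀ j, b j ≤ w j)
    (hpa : ∀ j, (∃ j', j < j' ∧ 0 < a j') → a j = w j)
    (hpb : ∀ j, (∃ j', j < j' ∧ 0 < b j') → b j = w j)
    (hsum : ∑ j, a j = ∑ j, b j) : a = b := by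
  classical
  by_contra hne
  have : (Finset.univ.filter (fun j => a j ≠ b j)).Nonempty := by
    rcases Function.ne_iff.mp hne with ⟨j, hj⟩
    exact ⟨j, by simpa using hj⟩
  set S := Finset.univ.filter (fun j => a j ≠ b j)
  obtain ⟨j, hjS, hjmax⟩ := S.exists_max_image id this
  have hjne : a j ≠ b j := by simpa [S] using hjS
  have hmax : ∀ j', j < j' → a j' = b j' := by
    intro j' hj'
    by_contra h
    exact absurd (hjmax j' (by simpa [S] using h)) (not_le.mpr hj')
  rcases lt_or_gt_of_ne hjne with h | h
  · exact key_uniq_aux w a b ha hpb hsum j hmax h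
  · exact key_uniq_aux w b a hb hpa hsum.symm j (fun j' hj' => (hmax j' hj').symm) h

-- greedy existence
lemma greedy_exists {m : ℕ} (w : Fin m → ℕ) (k : ℕ) (hk : k ≤ ∑ j, w j) :
    ∃ a : Fin m → ℕ, (∀ j, a j ≤ w j) ∧
      (∀ j, (∃ j', j < j' ∧ 0 < a j') → a j = w j) ∧ ∑ j, a j = k := by
  classical
  set w' : ℕ → ℕ := fun i => if h : i < m then w ⟨i, h⟩ else 0 with hw'
  set a' : ℕ → ℕ := fun i => min (w' i) (k - ∑ x ∈ Finset.range i, w' x) with ha'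
  have hsum' : ∀ N, ∑ i ∈ Finset.range N, a' i
      = min k (∑ i ∈ Finset.range N, w' i) := by
    intro N
    induction N with
    | zero => simp
    | succ N ih =>
      rw [Finset.sum_range_succ, Finset.sum_range_succ, ih, ha']
      simp only
      omega
  have hwsum : ∑ i ∈ Finset.range m, w' i = ∑ j, w j := by
    rw [← Fin.sum_univ_eq_sum_range]
    exact Finset.sum_congr rfl (fun j _ => by simp [hw'])
  refine ⟨fun j => a' j.val, fun j => ?_, fun j hj => ?_, ?_⟩
  · have : w' j.val = w j := by simp [hw']
    simp only [ha']
    omega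
  · obtain ⟨j', hjj', hpos⟩ := hj
    have hwj : w' j.val = w j := by simp [hw']
    have hle : ∑ x ∈ Finset.range (j.val + 1), w' x ≤ ∑ x ∈ Finset.range j'.val, w' x :=
      Finset.sum_le_sum_of_subset (Finset.range_subset_range.mpr hjj')
    rw [Finset.sum_range_succ] at hle
    have hpos' : 0 < a' j'.val := hpos
    simp only [ha'] at hpos' ⊢
    omega
  · rw [Fin.sum_univ_eq_sum_range, hsum', hwsum]
    omega

/-- For each even `c` between `0` and `s + 2·∑ w j`, there is exactly one admissible
pair `(t, a)` with `t + 2·∑ a j = c`. -/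
theorem stmt_12 (n : ℕ) (hn : 1 ≤ n) (s : ℕ) (w : Fin (n - 1) → ℕ)
    (c : ℕ) (hc : Even c) (hcb : c ≤ s + 2 * ∑ j, w j) :
    ∃! p : ℕ × (Fin (n - 1) → ℕ),
      Admissible n s w p.1 p.2 ∧ p.1 + 2 * ∑ j, p.2 j = c := by
  rcases hc with ⟨r, hr⟩
  by_cases hle : c ≤ 2 * ∑ j, w j
  · obtain ⟨a, ha, hpa, hsa⟩ := greedy_exists w r (by omega)
    refine ⟨(0, a), ⟨⟨Nat.zero_le _, ha, Even.zero, fun j h => ?_⟩, by simp [hsa]; omega⟩, ?_⟩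
    · rcases h with h | h
      · omega
      · exact hpa j h
    · rintro ⟨t, b⟩ ⟨⟨hts, hbw, hte, hprop⟩, hsum⟩
      simp only at hsum
      rcases Nat.eq_zero_or_pos t with rfl | htpos
      · have hbeq : b = a := by
          refine key_uniq w b a hbw ha (fun j h => hprop j (Or.inr h)) hpa ?_
          omega
        simp [hbeq]
      · have hbw' : b = w := funext fun j => hprop j (Or.inl htpos)
        subst hbw'
        obtain ⟨u, hu⟩ := hte
        omega
  · refine ⟨(c - 2 * ∑ j, w j, w),
      ⟨⟨by omega, fun j => le_rfl, ⟨r - ∑ j, w j, by omega⟩, fun j _ => rfl⟩, by show c - 2 * ∑ j, w j + 2 * ∑ j, w j = c; omega⟩, ?_⟩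
    rintro ⟨t, b⟩ ⟨⟨hts, hbw, hte, hprop⟩, hsum⟩
    have hble : ∑ j, b j ≤ ∑ j, w j := Finset.sum_le_sum fun j _ => hbw j
    simp only at hsum
    rcases Nat.eq_zero_or_pos t with rfl | htpos
    · omega
    · have hbw' : b = w := funext fun j => hprop j (Or.inl htpos)
      subst hbw'
      simp only [Prod.mk.injEq]
      exact ⟨by omega, trivial⟩
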